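/- Let p = p(n) ∈ [0,1] satisfy (n(1−p))⁴p² → λ ∈ (0,∞) and p → 0 as n → ∞. Then both the probability that the complement of G(n,p) is 4-chordal and the probability that the complement of G(n,p) is chordal converge, as n → ∞, to e^{−√λ/2}·(1 + √λ/2). (Equivalently, the probabilities that the edge ideal I(n,p) has linear presentation and that it has linear resolution both converge to this value.) -/

import Mathlib

/-!
The hypotheses give `n² p → √λ`. The number of edges of `G(n,p)` is binomial with `C(n,2)`
trials and mean `C(n,2) p → μ := √λ / 2`, so it is at most one with probability tending to
`e^{-μ} (1 + μ)`, while the expected number of cherries (two edges sharing a vertex) is at most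
`n³ p² → 0`. If `G` has at most one edge, `Gᶜ` is chordal: the diagonals `v₀v₂` and `v₁v₃` of a
chordless cycle of `Gᶜ` of length at least 4 are two distinct edges of `G`. If `G` has two edges
and no cherry, the edges are disjoint, say `ab` and `cd`, and `a c b d` is a chordless 4-cycle
of `Gᶜ`. So both probabilities are squeezed between `P(at most one edge)` and
`P(at most one edge) + P(cherry)`.
-/

open Filter

/-- Probability weight of a given graph `G` under the Erdős–Rényi model `G(n,p)`:
each of the `n.choose 2` possible edges is present independently with probability `p`. -/
noncomputable def graphWeight (n : ℕ) (p : ℝ) (G : SimpleGraph (Fin n)) : ℝ :=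
  p ^ Nat.card G.edgeSet * (1 - p) ^ (n.choose 2 - Nat.card G.edgeSet)

/-- Probability of the event `A` under the Erdős–Rényi random graph `G(n,p)`. -/
noncomputable def erProb (n : ℕ) (p : ℝ) (A : Set (SimpleGraph (Fin n))) : ℝ :=
  ∑ G : SimpleGraph (Fin n), A.indicator (graphWeight n p) G

/-- `v : ZMod k → V` describes a chordless (induced) `k`-cycle of `G`:
it is injective, consecutive vertices are adjacent, and non-consecutive
vertices are non-adjacent. -/
def IsChordlessCycleOn {V : Type} (G : SimpleGraph V) {k : ℕ} (v : ZMod k → V) : Prop :=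
  Function.Injective v ∧
    (∀ i : ZMod k, G.Adj (v i) (v (i + 1))) ∧
    ∀ i j : ZMod k, i ≠ j → j ≠ i + 1 → i ≠ j + 1 → ¬G.Adj (v i) (v j)

/-- A graph is 4-chordal if every cycle of length 4 has a chord, i.e. there is
no chordless 4-cycle. -/
def FourChordal {V : Type} (G : SimpleGraph V) : Prop :=
  ¬∃ v : ZMod 4 → V, IsChordlessCycleOn G v

/-- A graph is chordal if every cycle of length at least 4 has a chord, i.e. there is
no chordless cycle of length at least 4. -/
def Chordal {V : Type} (G : SimpleGraph V) : Prop :=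
  ∀ k : ℕ, 4 ≤ k → ¬∃ v : ZMod k → V, IsChordlessCycleOn G v

open Finset Topology

section Cycles

variable {V : Type} {G : SimpleGraph V}

lemma ZMod.natCast_ne_zero_of_pos_of_lt {k m : ℕ} (h0 : 0 < m) (hm : m < k) :
    (m : ZMod k) ≠ 0 := by
  rw [Ne, ZMod.natCast_eq_zero_iff]
  exact Nat.not_dvd_of_pos_of_lt h0 hm

lemma IsChordlessCycleOn.compl_adj_add_two {k : ℕ} (hk : 4 ≤ k) {v : ZMod k → V}
    (hv : IsChordlessCycleOn Gᶜ v) (i : ZMod k) : G.Adj (v i) (v (i + 2)) := by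
  have h1 : (1 : ZMod k) ≠ 0 :=
    mod_cast ZMod.natCast_ne_zero_of_pos_of_lt (m := 1) one_pos (by omega)
  have h2 : (2 : ZMod k) ≠ 0 :=
    mod_cast ZMod.natCast_ne_zero_of_pos_of_lt (m := 2) two_pos (by omega)
  have h3 : (3 : ZMod k) ≠ 0 :=
    mod_cast ZMod.natCast_ne_zero_of_pos_of_lt (m := 3) three_pos (by omega)
  have hne : i ≠ i + 2 := by simpa using h2
  have hchord := hv.2.2 i (i + 2) hne (fun h => h1 (by linear_combination h))
    (fun h => h3 (by linear_combination -h))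
  rw [SimpleGraph.compl_adj, not_and, not_not] at hchord
  exact hchord (hv.1.ne hne)

lemma chordal_compl_of_card_edgeFinset_le_one [Fintype G.edgeSet]
    (h : #G.edgeFinset ≤ 1) : Chordal Gᶜ := by
  rintro k hk ⟨v, hv⟩
  have h1 : (1 : ZMod k) ≠ 0 :=
    mod_cast ZMod.natCast_ne_zero_of_pos_of_lt (m := 1) one_pos (by omega)
  have h3 : (3 : ZMod k) ≠ 0 :=
    mod_cast ZMod.natCast_ne_zero_of_pos_of_lt (m := 3) three_pos (by omega)
  refine h.not_gt (Finset.one_lt_card_iff.2 ⟨s(v 0, v (0 + 2)), s(v 1, v (1 + 2)),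
    by simpa using hv.compl_adj_add_two hk 0, by simpa using hv.compl_adj_add_two hk 1, ?_⟩)
  rw [Ne, Sym2.eq_iff, not_or]
  constructor
  · exact fun h => h1 (hv.1 h.1).symm
  · exact fun h => h3 (by linear_combination -hv.1 h.1)

lemma isChordlessCycleOn_four {a b c d : V} (hab : G.Adj a b) (hbc : G.Adj b c)
    (hcd : G.Adj c d) (hda : G.Adj d a) (hac : ¬G.Adj a c) (hbd : ¬G.Adj b d)
    (hac' : a ≠ c) (hbd' : b ≠ d) : IsChordlessCycleOn (k := 4) G ![a, b, c, d] := by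
  have hZ : ∀ i : ZMod 4, i = 0 ∨ i = 1 ∨ i = 2 ∨ i = 3 := by decide
  refine ⟨fun i j hij => ?_, fun i => ?_, fun i j hij hj hi => ?_⟩
  · rcases hZ i with rfl | rfl | rfl | rfl <;> rcases hZ j with rfl | rfl | rfl | rfl <;>
      simp_all [G.ne_of_adj, (G.ne_of_adj _).symm]
  · rcases hZ i with rfl | rfl | rfl | rfl
    exacts [hab, hbc, hcd, hda]
  · rcases hZ i with rfl | rfl | rfl | rfl <;> rcases hZ j with rfl | rfl | rfl | rfl <;>
      first | (exfalso; revert hij hj hi; decide) | simp_all [G.adj_comm]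

def HasCherry (G : SimpleGraph V) : Prop :=
  ∃ x y z, y ≠ z ∧ G.Adj x y ∧ G.Adj x z

lemma eq_of_adj_of_adj_of_not_hasCherry (hG : ¬HasCherry G) {x y z : V} (hxy : G.Adj x y)
    (hxz : G.Adj x z) : y = z := by
  by_contra hyz
  exact hG ⟨x, y, z, hyz, hxy, hxz⟩

lemma not_fourChordal_compl_of_adj_of_adj (hG : ¬HasCherry G) {a b c d : V} (hab : G.Adj a b)
    (hcd : G.Adj c d) (hne : s(a, b) ≠ s(c, d)) : ¬FourChordal Gᶜ := by
  have key {x y z : V} : G.Adj x y → G.Adj x z → y = z := eq_of_adj_of_adj_of_not_hasCherry hG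
  have hac : a ≠ c := by
    rintro rfl
    exact hne (by rw [key hab hcd])
  have had : a ≠ d := by
    rintro rfl
    exact hne (by rw [key hab hcd.symm, Sym2.eq_swap])
  have hbc : b ≠ c := by
    rintro rfl
    exact hne (by rw [key hab.symm hcd, Sym2.eq_swap])
  have hbd : b ≠ d := by
    rintro rfl
    exact hne (by rw [key hab.symm hcd.symm])
  have hcompl {x y : V} (hxy : x ≠ y) (h : G.Adj x y → False) : Gᶜ.Adj x y :=
    (SimpleGraph.compl_adj G x y).2 ⟨hxy, h⟩
  refine not_not.2 ⟨![a, c, b, d], isChordlessCycleOn_four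
    (hcompl hac fun h => hbc (key hab h)) (hcompl hbc.symm fun h => hbd (key h hcd))
    (hcompl hbd fun h => had (key hab.symm h)) (hcompl had.symm fun h => hac (key h hcd.symm))
    (fun h => h.2 hab) (fun h => h.2 hcd) (G.ne_of_adj hab) (G.ne_of_adj hcd)⟩

lemma not_fourChordal_compl_of_one_lt_card [Fintype G.edgeSet] (h : 1 < #G.edgeFinset)
    (hG : ¬HasCherry G) : ¬FourChordal Gᶜ := by
  obtain ⟨e, f, he, hf, hef⟩ := Finset.one_lt_card_iff.1 h
  induction e using Sym2.ind with | _ a b =>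
  induction f using Sym2.ind with | _ c d =>
  exact not_fourChordal_compl_of_adj_of_adj hG (by simpa using he) (by simpa using hf) hef

lemma Chordal.fourChordal (h : Chordal G) : FourChordal G :=
  h 4 le_rfl

end Cycles

section ErdosRenyi

variable {n : ℕ} {p : ℝ}

lemma graphWeight_nonneg (hp : p ∈ Set.Icc (0 : ℝ) 1) (G : SimpleGraph (Fin n)) :
    0 ≤ graphWeight n p G :=
  mul_nonneg (pow_nonneg hp.1 _) (pow_nonneg (sub_nonneg.2 hp.2) _)

lemma erProb_nonneg (hp : p ∈ Set.Icc (0 : ℝ) 1) (A : Set (SimpleGraph (Fin n))) :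
    0 ≤ erProb n p A :=
  Finset.sum_nonneg fun G _ => Set.indicator_nonneg (fun G _ => graphWeight_nonneg hp G) G

lemma erProb_mono (hp : p ∈ Set.Icc (0 : ℝ) 1) {A B : Set (SimpleGraph (Fin n))} (hAB : A ⊆ B) :
    erProb n p A ≤ erProb n p B :=
  Finset.sum_le_sum fun G _ =>
    Set.indicator_le_indicator_of_subset hAB (fun G => graphWeight_nonneg hp G) G

lemma erProb_union_le (hp : p ∈ Set.Icc (0 : ℝ) 1) (A B : Set (SimpleGraph (Fin n))) :
    erProb n p (A ∪ B) ≤ erProb n p A + erProb n p B := by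
  simp only [erProb, ← Finset.sum_add_distrib]
  refine Finset.sum_le_sum fun G _ => ?_
  have h := congrFun (Set.indicator_union_add_inter (graphWeight n p) A B) G
  have h0 := Set.indicator_nonneg (s := A ∩ B) (fun G _ => graphWeight_nonneg hp G) G
  rw [Pi.add_apply, Pi.add_apply] at h
  linarith

lemma erProb_le_sum_of_subset_biUnion {ι : Type*} (hp : p ∈ Set.Icc (0 : ℝ) 1)
    {A : Set (SimpleGraph (Fin n))} (t : Finset ι) (E : ι → Set (SimpleGraph (Fin n)))
    (hA : A ⊆ ⋃ i ∈ t, E i) : erProb n p A ≤ ∑ i ∈ t, erProb n p (E i) := by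
  simp only [erProb]
  rw [Finset.sum_comm]
  have hw := fun G => graphWeight_nonneg (n := n) hp G
  refine Finset.sum_le_sum fun G _ => ?_
  by_cases hG : G ∈ A
  · obtain ⟨i, hi, hGi⟩ := Set.mem_iUnion₂.1 (hA hG)
    rw [Set.indicator_of_mem hG, ← Set.indicator_of_mem hGi (graphWeight n p)]
    exact Finset.single_le_sum (fun j _ => Set.indicator_nonneg (fun G _ => hw G) G) hi
  · rw [Set.indicator_of_notMem hG]
    exact Finset.sum_nonneg fun j _ => Set.indicator_nonneg (fun G _ => hw G) G

open scoped Classical in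
lemma erProb_setOf_edgeFinset (P : Finset (Sym2 (Fin n)) → Prop) [DecidablePred P] :
    erProb n p {G | P G.edgeFinset} =
      ∑ s ∈ (⊤ : SimpleGraph (Fin n)).edgeFinset.powerset with P s,
        p ^ #s * (1 - p) ^ (n.choose 2 - #s) := by
  rw [Finset.sum_filter, erProb]
  refine Finset.sum_nbij' (fun G => G.edgeFinset) (fun s => SimpleGraph.fromEdgeSet s)
    (fun G _ => Finset.mem_powerset.2 (SimpleGraph.edgeFinset_mono le_top))
    (fun _ _ => Finset.mem_univ _) (fun G _ => by simp) (fun s hs => ?_) (fun G _ => ?_)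
  · ext e
    simpa using fun he => SimpleGraph.not_isDiag_of_mem_edgeFinset (Finset.mem_powerset.1 hs he)
  · simp [Set.indicator_apply, graphWeight, Nat.card_eq_fintype_card, SimpleGraph.edgeFinset_card]

open scoped Classical in
lemma erProb_card_edgeFinset_le_one :
    erProb n p {G | #G.edgeFinset ≤ 1} =
      (1 - p) ^ n.choose 2 + n.choose 2 * p * (1 - p) ^ (n.choose 2 - 1) := by
  set T := (⊤ : SimpleGraph (Fin n)).edgeFinset
  have hT : #T = n.choose 2 := by
    rw [SimpleGraph.card_edgeFinset_top_eq_card_choose_two, Fintype.card_fin]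
  have hsplit : {s ∈ T.powerset | #s ≤ 1} = T.powersetCard 0 ∪ T.powersetCard 1 := by
    ext s
    simp only [Finset.mem_filter, Finset.mem_powerset, Finset.mem_union, Finset.mem_powersetCard,
      Nat.le_one_iff_eq_zero_or_eq_one, and_or_left]
  have hone : ∑ s ∈ T.powersetCard 1, p ^ #s * (1 - p) ^ (n.choose 2 - #s) =
      n.choose 2 * (p * (1 - p) ^ (n.choose 2 - 1)) := by
    rw [Finset.sum_congr rfl fun s hs => by rw [(Finset.mem_powersetCard.1 hs).2, pow_one],
      Finset.sum_const, Finset.card_powersetCard, Nat.choose_one_right, hT, nsmul_eq_mul]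
  rw [erProb_setOf_edgeFinset (fun s => #s ≤ 1), hsplit,
    Finset.sum_union (T.pairwise_disjoint_powersetCard zero_ne_one), hone,
    Finset.powersetCard_zero, Finset.sum_singleton, Finset.card_empty, pow_zero, one_mul,
    Nat.sub_zero, mul_assoc]

open scoped Classical in
lemma erProb_superset_edgeFinset {S : Finset (Sym2 (Fin n))}
    (hS : S ⊆ (⊤ : SimpleGraph (Fin n)).edgeFinset) :
    erProb n p {G | S ⊆ G.edgeFinset} = p ^ #S := by
  rw [erProb_setOf_edgeFinset (fun s => S ⊆ s), Finset.sum_filter]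
  set T := (⊤ : SimpleGraph (Fin n)).edgeFinset
  have hT : #T = n.choose 2 := by
    rw [SimpleGraph.card_edgeFinset_top_eq_card_choose_two, Fintype.card_fin]
  have hexpand := Finset.prod_add (fun _ => p) (fun e => if e ∈ S then 0 else 1 - p) T
  have hlhs : ∏ e ∈ T, (p + if e ∈ S then 0 else 1 - p) = p ^ #S := by
    rw [Finset.prod_congr rfl fun e _ => show (p + if e ∈ S then 0 else 1 - p) =
      if e ∈ S then p else 1 by split_ifs <;> ring, Finset.prod_ite_mem, Finset.prod_const,
      Finset.inter_eq_right.2 hS]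
  have hterm : ∀ s ∈ T.powerset, ((∏ _e ∈ s, p) * ∏ e ∈ T \ s, if e ∈ S then 0 else 1 - p) =
      if S ⊆ s then p ^ #s * (1 - p) ^ (n.choose 2 - #s) else 0 := by
    intro s hs
    rw [Finset.prod_const]
    split_ifs with hSs
    · rw [Finset.prod_congr rfl fun e he => if_neg fun heS => (Finset.mem_sdiff.1 he).2 (hSs heS),
        Finset.prod_const, Finset.card_sdiff_of_subset (Finset.mem_powerset.1 hs), hT]
    · obtain ⟨e, heS, hes⟩ := Finset.not_subset.1 hSs
      rw [Finset.prod_eq_zero (f := fun e => if e ∈ S then (0 : ℝ) else 1 - p)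
        (Finset.mem_sdiff.2 ⟨hS heS, hes⟩) (if_pos heS), mul_zero]
  rw [← Finset.sum_congr rfl hterm, ← hexpand, hlhs]

open scoped Classical in
lemma erProb_hasCherry_le (hp : p ∈ Set.Icc (0 : ℝ) 1) :
    erProb n p {G | HasCherry G} ≤ n ^ 3 * p ^ 2 := by
  set t := (Finset.univ : Finset (Fin n × Fin n × Fin n)).filter
    fun w => w.1 ≠ w.2.1 ∧ w.1 ≠ w.2.2 ∧ w.2.1 ≠ w.2.2
  set E : Fin n × Fin n × Fin n → Set (SimpleGraph (Fin n)) :=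
    fun w => {G | {s(w.1, w.2.1), s(w.1, w.2.2)} ⊆ G.edgeFinset}
  have hcover : {G | HasCherry G} ⊆ ⋃ w ∈ t, E w := by
    rintro G ⟨x, y, z, hyz, hxy, hxz⟩
    refine Set.mem_iUnion₂.2 ⟨(x, y, z), ?_, ?_⟩
    · simp [t, G.ne_of_adj hxy, G.ne_of_adj hxz, hyz]
    · simp [E, Finset.insert_subset_iff, hxy, hxz]
  have hE : ∀ w ∈ t, erProb n p (E w) = p ^ 2 := by
    rintro ⟨x, y, z⟩ hw
    simp only [t, Finset.mem_filter, Finset.mem_univ, true_and] at hw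
    obtain ⟨hxy, hxz, hyz⟩ := hw
    rw [erProb_superset_edgeFinset (by simp [Finset.insert_subset_iff, hxy, hxz]),
      Finset.card_pair (by simp [hxz, hyz])]
  have ht : #t ≤ n ^ 3 := (Finset.card_filter_le _ _).trans (by simp [pow_three])
  calc erProb n p {G | HasCherry G} ≤ ∑ w ∈ t, erProb n p (E w) :=
        erProb_le_sum_of_subset_biUnion hp t E hcover
    _ = #t * p ^ 2 := by rw [Finset.sum_congr rfl hE, Finset.sum_const, nsmul_eq_mul]
    _ ≤ n ^ 3 * p ^ 2 := by gcongr; exact_mod_cast ht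

end ErdosRenyi

section Asymptotics

lemma tendsto_one_sub_pow_exp {ι : Type*} {l : Filter ι} {N : ι → ℕ} {q : ι → ℝ} {μ : ℝ}
    (hq : Tendsto q l (𝓝 0)) (hNq : Tendsto (fun i => N i * q i) l (𝓝 μ)) :
    Tendsto (fun i => (1 - q i) ^ N i) l (𝓝 (Real.exp (-μ))) := by
  have hq1 : ∀ᶠ i in l, q i < 1 := hq.eventually (gt_mem_nhds one_pos)
  have hinv : Tendsto (fun i => (1 - q i)⁻¹) l (𝓝 1) := by
    simpa using (tendsto_const_nhds.sub hq).inv₀ (by norm_num : (1 : ℝ) - 0 ≠ 0)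
  -- `-x / (1 - x) ≤ log (1 - x) ≤ -x` squeezes `N log (1 - q)` to `-μ`
  have hlog : Tendsto (fun i => N i * Real.log (1 - q i)) l (𝓝 (-μ)) := by
    have hlo := hNq.neg.mul hinv
    rw [mul_one] at hlo
    refine tendsto_of_tendsto_of_tendsto_of_le_of_le' hlo hNq.neg ?_ ?_
    all_goals filter_upwards [hq1] with i hi
    · have h := Real.one_sub_inv_le_log_of_pos (sub_pos.2 hi)
      have hne := (sub_pos.2 hi).ne'
      calc -(N i * q i) * (1 - q i)⁻¹ = N i * (1 - (1 - q i)⁻¹) := by field_simp; ring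
        _ ≤ N i * Real.log (1 - q i) := by gcongr
    · have h := Real.log_le_sub_one_of_pos (sub_pos.2 hi)
      calc N i * Real.log (1 - q i) ≤ N i * (-q i) := by gcongr; linarith
        _ = -(N i * q i) := by ring
  refine (Real.continuous_exp.tendsto _ |>.comp hlog).congr' ?_
  filter_upwards [hq1] with i hi
  rw [Function.comp_apply, ← Real.log_pow, Real.exp_log (pow_pos (sub_pos.2 hi) _)]

lemma tendsto_binomial_prob_le_one {ι : Type*} {l : Filter ι} {N : ι → ℕ} {q : ι → ℝ} {μ : ℝ}
    (hq : Tendsto q l (𝓝 0)) (hNq : Tendsto (fun i => N i * q i) l (𝓝 μ)) :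
    Tendsto (fun i => (1 - q i) ^ N i + N i * q i * (1 - q i) ^ (N i - 1)) l
      (𝓝 (Real.exp (-μ) * (1 + μ))) := by
  have hpow := tendsto_one_sub_pow_exp hq hNq
  have hinv : Tendsto (fun i => (1 - q i)⁻¹) l (𝓝 1) := by
    simpa using (tendsto_const_nhds.sub hq).inv₀ (by norm_num : (1 : ℝ) - 0 ≠ 0)
  have hpred : Tendsto (fun i => N i * q i * (1 - q i) ^ (N i - 1)) l
      (𝓝 (μ * Real.exp (-μ))) := by
    have h := (hNq.mul hpow).mul hinv
    rw [mul_one] at h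
    refine h.congr' ?_
    filter_upwards [hq.eventually (gt_mem_nhds one_pos)] with i hi
    rcases Nat.eq_zero_or_pos (N i) with hN | hN
    · simp [hN]
    · rw [← Nat.sub_add_cancel hN, pow_succ, Nat.add_sub_cancel]
      field_simp [(sub_pos.2 hi).ne']
  convert hpow.add hpred using 2
  ring

variable {p : ℕ → ℝ}

lemma tendsto_sq_mul_of_tendsto_mul_one_sub_pow_four (hp : ∀ n, 0 ≤ p n) {lam : ℝ}
    (h : Tendsto (fun n : ℕ => ((n : ℝ) * (1 - p n)) ^ 4 * p n ^ 2) atTop (𝓝 lam))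
    (hp0 : Tendsto p atTop (𝓝 0)) :
    Tendsto (fun n : ℕ => (n : ℝ) ^ 2 * p n) atTop (𝓝 (Real.sqrt lam)) := by
  have hsqrt : Tendsto (fun n : ℕ => (n : ℝ) ^ 2 * p n * (1 - p n) ^ 2) atTop
      (𝓝 (Real.sqrt lam)) := by
    refine ((Real.continuous_sqrt.tendsto lam).comp h).congr fun n => ?_
    rw [Function.comp_apply, show ((n : ℝ) * (1 - p n)) ^ 4 * p n ^ 2 =
      ((n : ℝ) ^ 2 * p n * (1 - p n) ^ 2) ^ 2 by ring,
      Real.sqrt_sq (mul_nonneg (mul_nonneg (sq_nonneg _) (hp n)) (sq_nonneg _))]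
  have hinv : Tendsto (fun n => ((1 - p n) ^ 2)⁻¹) atTop (𝓝 1) := by
    simpa using ((tendsto_const_nhds.sub hp0).pow 2).inv₀ (by norm_num : ((1 : ℝ) - 0) ^ 2 ≠ 0)
  have h := hsqrt.mul hinv
  rw [mul_one] at h
  refine h.congr' ?_
  filter_upwards [hp0.eventually (gt_mem_nhds one_pos)] with n hn
  field_simp [(sub_pos.2 hn).ne']

lemma tendsto_choose_two_mul_of_tendsto_sq_mul {c : ℝ}
    (h : Tendsto (fun n : ℕ => (n : ℝ) ^ 2 * p n) atTop (𝓝 c)) :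
    Tendsto (fun n : ℕ => (n.choose 2 : ℝ) * p n) atTop (𝓝 (c / 2)) := by
  have hlin : Tendsto (fun n : ℕ => (n : ℝ) * p n) atTop (𝓝 0) := by
    have h' := h.mul (tendsto_inv_atTop_nhds_zero_nat (𝕜 := ℝ))
    rw [mul_zero] at h'
    refine h'.congr' ?_
    filter_upwards [eventually_ne_atTop 0] with n hn
    field_simp
  have h' := (h.sub hlin).div_const 2
  rw [sub_zero] at h'
  refine h'.congr fun n => ?_
  rw [Nat.cast_choose_two]
  ring

lemma tendsto_cube_mul_sq_of_tendsto_sq_mul {c : ℝ}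
    (h : Tendsto (fun n : ℕ => (n : ℝ) ^ 2 * p n) atTop (𝓝 c)) :
    Tendsto (fun n : ℕ => (n : ℝ) ^ 3 * p n ^ 2) atTop (𝓝 0) := by
  have h' := (h.pow 2).mul (tendsto_inv_atTop_nhds_zero_nat (𝕜 := ℝ))
  rw [mul_zero] at h'
  refine h'.congr' ?_
  filter_upwards [eventually_ne_atTop 0] with n hn
  field_simp

end Asymptotics

lemma tendsto_erProb_of_subset_of_subset_union {p : ℕ → ℝ} (hp : ∀ n, p n ∈ Set.Icc (0 : ℝ) 1)
    {A B E : ∀ n, Set (SimpleGraph (Fin n))} {L : ℝ}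
    (hA : Tendsto (fun n => erProb n (p n) (A n)) atTop (𝓝 L))
    (hB : Tendsto (fun n => erProb n (p n) (B n)) atTop (𝓝 0))
    (hAE : ∀ n, A n ⊆ E n) (hEAB : ∀ n, E n ⊆ A n ∪ B n) :
    Tendsto (fun n => erProb n (p n) (E n)) atTop (𝓝 L) := by
  refine tendsto_of_tendsto_of_tendsto_of_le_of_le hA (by simpa using hA.add hB)
    (fun n => erProb_mono (hp n) (hAE n)) fun n => ?_
  exact (erProb_mono (hp n) (hEAB n)).trans (erProb_union_le (hp n) _ _)

theorem linear_presentation_resolution_prob_sparse_general (p : ℕ → ℝ)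
    (hp : ∀ n, p n ∈ Set.Icc (0 : ℝ) 1) (lam : ℝ)
    (h : Tendsto (fun n : ℕ => ((n : ℝ) * (1 - p n)) ^ 4 * p n ^ 2) atTop (nhds lam))
    (hp0 : Tendsto p atTop (nhds 0)) :
    Tendsto (fun n : ℕ => erProb n (p n) {G | FourChordal Gᶜ}) atTop
      (nhds (Real.exp (-Real.sqrt lam / 2) * (1 + Real.sqrt lam / 2))) ∧
    Tendsto (fun n : ℕ => erProb n (p n) {G | Chordal Gᶜ}) atTop
      (nhds (Real.exp (-Real.sqrt lam / 2) * (1 + Real.sqrt lam / 2))) := by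
  classical
  have hsq := tendsto_sq_mul_of_tendsto_mul_one_sub_pow_four (fun n => (hp n).1) h hp0
  have hsparse : Tendsto (fun n => erProb n (p n) {G | #G.edgeFinset ≤ 1}) atTop
      (nhds (Real.exp (-Real.sqrt lam / 2) * (1 + Real.sqrt lam / 2))) := by
    simp_rw [erProb_card_edgeFinset_le_one, neg_div]
    exact tendsto_binomial_prob_le_one hp0 (tendsto_choose_two_mul_of_tendsto_sq_mul hsq)
  have hcherry : Tendsto (fun n => erProb n (p n) {G | HasCherry G}) atTop (nhds 0) :=
    squeeze_zero (fun n => erProb_nonneg (hp n) _) (fun n => erProb_hasCherry_le (hp n))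
      (tendsto_cube_mul_sq_of_tendsto_sq_mul hsq)
  have hchordal (n : ℕ) : {G : SimpleGraph (Fin n) | #G.edgeFinset ≤ 1} ⊆ {G | Chordal Gᶜ} :=
    fun G => chordal_compl_of_card_edgeFinset_le_one
  have hfour (n : ℕ) : {G : SimpleGraph (Fin n) | Chordal Gᶜ} ⊆ {G | FourChordal Gᶜ} :=
    fun G => Chordal.fourChordal
  have hcover (n : ℕ) : {G : SimpleGraph (Fin n) | FourChordal Gᶜ} ⊆
      {G | #G.edgeFinset ≤ 1} ∪ {G | HasCherry G} := by
    intro G hG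
    by_contra hc
    simp only [Set.mem_union, Set.mem_ofPred_eq, not_or, not_le] at hc
    exact not_fourChordal_compl_of_one_lt_card hc.1 hc.2 hG
  exact ⟨tendsto_erProb_of_subset_of_subset_union hp hsparse hcherry
      (fun n => (hchordal n).trans (hfour n)) hcover,
    tendsto_erProb_of_subset_of_subset_union hp hsparse hcherry hchordal
      fun n => (hfour n).trans (hcover n)⟩

/-- If `(n(1-p))⁴ p² → lam ∈ (0,∞)` and `p → 0`, then the probabilities that the
complement of `G(n,p)` is 4-chordal and that it is chordal (equivalently, that the
edge ideal `I(n,p)` has linear presentation, resp. linear resolution) both converge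
to `e^{-√lam/2} (1 + √lam/2)`. -/
theorem linear_presentation_resolution_prob_sparse (p : ℕ → ℝ)
    (hp : ∀ n, p n ∈ Set.Icc (0 : ℝ) 1) (lam : ℝ) (hlam : 0 < lam)
    (h : Tendsto (fun n : ℕ => ((n : ℝ) * (1 - p n)) ^ 4 * p n ^ 2) atTop (nhds lam))
    (hp0 : Tendsto p atTop (nhds 0)) :
    Tendsto (fun n : ℕ => erProb n (p n) {G | FourChordal Gᶜ}) atTop
      (nhds (Real.exp (-Real.sqrt lam / 2) * (1 + Real.sqrt lam / 2))) ∧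
    Tendsto (fun n : ℕ => erProb n (p n) {G | Chordal Gᶜ}) atTop
      (nhds (Real.exp (-Real.sqrt lam / 2) * (1 + Real.sqrt lam / 2))) :=
  linear_presentation_resolution_prob_sparse_general p hp lam h hp0
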